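/- There is a constant C depending only on the dimension d with the following property. Let X be a bounded open convex subset of ℝ^d, let ε > 0, and let U_ε ⊆ ∂X be a boundary ε-sample with associated discretized constraint set M_ε. Then for every Lipschitz function g ∈ C(X) satisfying ℓ(g) ≤ 0 for all ℓ ∈ M_ε, the convex envelope ḡ of g satisfies ‖g − ḡ‖_∞ ≤ C · Lip(g) · ε. -/

import Mathlib

/-!
The constraints in `M_ε` say that `g` is convex along every discrete segment `c_{pq}`. A segment
`[u, v]` in `closure X` extends to a chord of `X` with endpoints on `∂X`, and these endpoints are
`ε`-close to points `p, q ∈ U_ε`; so `u`, `v` and any point of `[u, v]` are `2ε`-close to points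
of `c_{pq}`, in the same order along the line. Transporting the discrete convexity inequality
back with the Lipschitz bound (short segments need only the Lipschitz bound) shows that `g` is
`8 Lip(g) ε`-convex on `closure X`. Jensen's inequality for `d + 1` points then holds up to
`d` times this defect, which bounds `g - ḡ`.
-/

open Set NNReal

noncomputable section

abbrev Esp (d : ℕ) := EuclideanSpace ℝ (Fin d)

/-- The value of the affine form `ℓ_{xyz}` on a function `g`: with `λ = ‖z−y‖/‖x−y‖`,
`ℓ_{xyz}(g) = g(z) − λ g(x) − (1−λ) g(y)`. -/
def ellVal {d : ℕ} (g : Esp d → ℝ) (x y z : Esp d) : ℝ :=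
  g z - (‖z - y‖ / ‖x - y‖) * g x - (1 - ‖z - y‖ / ‖x - y‖) * g y

/-- The discrete segment `c_{pq} = {p + εi(q−p)/‖q−p‖ : i ∈ ℕ, 0 ≤ i ≤ ‖q−p‖/ε}`. -/
def discreteSeg {d : ℕ} (ε : ℝ) (p q : Esp d) : Set (Esp d) :=
  {x | ∃ i : ℕ, (i : ℝ) ≤ ‖q - p‖ / ε ∧ x = p + ((ε * i) / ‖q - p‖) • (q - p)}

/-- `U` is an `ε`-sample of the boundary of `X`: `U ⊆ ∂X` and every point of `∂X` is within
distance `ε` of a point of `U`. -/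
def IsBoundarySample {d : ℕ} (X : Set (Esp d)) (ε : ℝ) (U : Set (Esp d)) : Prop :=
  U ⊆ frontier X ∧ ∀ x ∈ frontier X, ∃ u ∈ U, ‖x - u‖ ≤ ε

/-- The data `(x, y, z)` defines a form `ℓ_{xyz}` of the discretized constraint set `M_ε`:
`x, y, z ∈ c_{pq}` for some distinct `p, q ∈ U` and `z ∈ [x,y]`. -/
def MemMeps {d : ℕ} (ε : ℝ) (U : Set (Esp d)) (x y z : Esp d) : Prop :=
  ∃ p ∈ U, ∃ q ∈ U, p ≠ q ∧ x ∈ discreteSeg ε p q ∧ y ∈ discreteSeg ε p q ∧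
    z ∈ discreteSeg ε p q ∧ x ≠ y ∧ z ∈ segment ℝ x y

/-- `g` belongs to `H_{M_ε}`, i.e. `ℓ(g) ≤ 0` for every form `ℓ ∈ M_ε`. -/
def SatisfiesMeps {d : ℕ} (ε : ℝ) (U : Set (Esp d)) (g : Esp d → ℝ) : Prop :=
  ∀ x y z : Esp d, MemMeps ε U x y z → ellVal g x y z ≤ 0

/-- The convex envelope of `g` on `X ⊆ ℝ^d`:
`ḡ(x) = inf { ∑_{i=1}^{d+1} λᵢ g(xᵢ) : xᵢ ∈ X, λ ∈ Δ^d, ∑ᵢ λᵢ xᵢ = x }`. -/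
def convEnv {d : ℕ} (X : Set (Esp d)) (g : Esp d → ℝ) (x : Esp d) : ℝ :=
  sInf {t : ℝ | ∃ (p : Fin (d + 1) → Esp d) (l : Fin (d + 1) → ℝ),
    (∀ i, p i ∈ X) ∧ (∀ i, 0 ≤ l i) ∧ (∑ i, l i) = 1 ∧ (∑ i, l i • p i) = x ∧
    t = ∑ i, l i * g (p i)}

open AffineMap
open scoped Finset

section ApproxConvex

variable {E : Type*} [AddCommGroup E] [Module ℝ E]

def IsApproxConvexOn (s : Set E) (g : E → ℝ) (δ : ℝ) : Prop :=
  ∀ ⦃u⦄, u ∈ s → ∀ ⦃v⦄, v ∈ s → ∀ ⦃a b : ℝ⦄, 0 ≤ a → 0 ≤ b → a + b = 1 →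
    g (a • u + b • v) ≤ a * g u + b * g v + δ

theorem IsApproxConvexOn.map_sum_le {s : Set E} {g : E → ℝ} {δ : ℝ} (hs : Convex ℝ s)
    (hg : IsApproxConvexOn s g δ) (hδ : 0 ≤ δ) {ι : Type*} {t : Finset ι} {w : ι → ℝ}
    {p : ι → E} (h₀ : ∀ i ∈ t, 0 ≤ w i) (h₁ : ∑ i ∈ t, w i = 1) (hp : ∀ i ∈ t, p i ∈ s) :
    g (∑ i ∈ t, w i • p i) ≤ ∑ i ∈ t, w i * g (p i) + (#t - 1) * δ := by
  induction t using Finset.cons_induction generalizing w with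
  | empty => simp at h₁
  | cons a t ha ih =>
    simp only [Finset.sum_cons, Finset.card_cons, Nat.cast_add, Nat.cast_one,
      add_sub_cancel_right] at h₁ ⊢
    have h₀a := h₀ a (Finset.mem_cons_self a t)
    have h₀t : ∀ i ∈ t, 0 ≤ w i := fun i hi ↦ h₀ i (Finset.mem_cons_of_mem hi)
    have hpt : ∀ i ∈ t, p i ∈ s := fun i hi ↦ hp i (Finset.mem_cons_of_mem hi)
    set r := ∑ i ∈ t, w i
    have hr : 0 ≤ r := Finset.sum_nonneg h₀t
    rcases hr.eq_or_lt with hr0 | hrpos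
    · have hw : ∀ i ∈ t, w i = 0 := (Finset.sum_eq_zero_iff_of_nonneg h₀t).1 hr0.symm
      have hwa : w a = 1 := by linarith
      rw [Finset.sum_eq_zero fun i hi ↦ by rw [hw i hi, zero_smul],
        Finset.sum_eq_zero fun i hi ↦ by rw [hw i hi, zero_mul], hwa]
      simp only [one_smul, one_mul, add_zero]
      exact le_add_of_nonneg_right (by positivity)
    · have h₀' : ∀ i ∈ t, 0 ≤ w i / r := fun i hi ↦ div_nonneg (h₀t i hi) hr
      have h₁' : ∑ i ∈ t, w i / r = 1 := by rw [← Finset.sum_div, div_self hrpos.ne']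
      set y := ∑ i ∈ t, (w i / r) • p i
      have hy : y ∈ s := hs.sum_mem h₀' h₁' hpt
      have hry : r • y = ∑ i ∈ t, w i • p i := by
        rw [Finset.smul_sum]
        refine Finset.sum_congr rfl fun i _ ↦ ?_
        rw [smul_smul, mul_div_cancel₀ _ hrpos.ne']
      have hrg : r * ∑ i ∈ t, w i / r * g (p i) = ∑ i ∈ t, w i * g (p i) := by
        rw [Finset.mul_sum]
        refine Finset.sum_congr rfl fun i _ ↦ ?_
        field_simp
      have hcard : (1 : ℝ) ≤ #t := by
        exact_mod_cast (Finset.nonempty_of_sum_ne_zero hrpos.ne').card_pos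
      have hshrink : 0 ≤ (1 - r) * ((#t - 1) * δ) :=
        mul_nonneg (by linarith) (mul_nonneg (by linarith) hδ)
      calc g (w a • p a + ∑ i ∈ t, w i • p i) = g (w a • p a + r • y) := by rw [hry]
        _ ≤ w a * g (p a) + r * g y + δ := hg (hp a (Finset.mem_cons_self a t)) hy h₀a hr h₁
        _ ≤ w a * g (p a) + r * (∑ i ∈ t, w i / r * g (p i) + (#t - 1) * δ) + δ := by
          gcongr
          exact ih h₀' h₁' hpt
        _ ≤ w a * g (p a) + ∑ i ∈ t, w i * g (p i) + #t * δ := by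
          rw [mul_add, hrg]; linarith

end ApproxConvex

theorem abs_sub_convEnv_le {d : ℕ} {X S : Set (Esp d)} {g : Esp d → ℝ} {δ : ℝ}
    (hS : Convex ℝ S) (hXS : X ⊆ S) (hg : IsApproxConvexOn S g δ) (hδ : 0 ≤ δ) {x : Esp d}
    (hx : x ∈ X) : |g x - convEnv X g x| ≤ d * δ := by
  rw [convEnv]
  set T := {t : ℝ | ∃ (p : Fin (d + 1) → Esp d) (l : Fin (d + 1) → ℝ),
    (∀ i, p i ∈ X) ∧ (∀ i, 0 ≤ l i) ∧ (∑ i, l i) = 1 ∧ (∑ i, l i • p i) = x ∧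
    t = ∑ i, l i * g (p i)}
  have hlower : ∀ t ∈ T, g x - d * δ ≤ t := by
    rintro t ⟨p, l, hp, hl, hsum, rfl, rfl⟩
    have := hg.map_sum_le hS hδ (fun i _ ↦ hl i) hsum fun i _ ↦ hXS (hp i)
    simp only [Finset.card_univ, Fintype.card_fin, Nat.cast_add, Nat.cast_one,
      add_sub_cancel_right] at this
    linarith
  have hself : g x ∈ T :=
    ⟨fun _ ↦ x, Pi.single 0 1, fun _ ↦ hx, fun i ↦ by rw [Pi.single_apply]; split_ifs <;> norm_num,
      by simp, by simp [← Finset.sum_smul], by simp [← Finset.sum_mul]⟩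
  have hle : sInf T ≤ g x := csInf_le ⟨_, hlower⟩ hself
  have hge : g x - d * δ ≤ sInf T := le_csInf ⟨_, hself⟩ hlower
  rw [abs_le]
  constructor <;> linarith [mul_nonneg (Nat.cast_nonneg (α := ℝ) d) hδ]

section Lipschitz

variable {E : Type*} [NormedAddCommGroup E] [NormedSpace ℝ E] {K : Set E} {g : E → ℝ}
  {L : ℝ≥0} {u v : E} {a b : ℝ}

theorem LipschitzOnWith.apply_smul_add_smul_le (hg : LipschitzOnWith L g K) (hu : u ∈ K)
    (hv : v ∈ K) (hz : a • u + b • v ∈ K) (ha : 0 ≤ a) (hb : 0 ≤ b) (hab : a + b = 1) :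
    g (a • u + b • v) ≤ a * g u + b * g v + L * ‖u - v‖ := by
  have hzu : ‖a • u + b • v - u‖ = b * ‖u - v‖ := by
    rw [show a • u + b • v - u = b • (v - u) by rw [show a = 1 - b by linarith]; module, norm_smul,
      Real.norm_of_nonneg hb, norm_sub_rev]
  have hzv : ‖a • u + b • v - v‖ = a * ‖u - v‖ := by
    rw [show a • u + b • v - v = a • (u - v) by rw [show b = 1 - a by linarith]; module, norm_smul,
      Real.norm_of_nonneg ha]
  have h₁ := hg.le_add_mul hz hu
  have h₂ := hg.le_add_mul hz hv
  rw [dist_eq_norm, hzu] at h₁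
  rw [dist_eq_norm, hzv] at h₂
  have hab2 : 2 * (a * b) ≤ 1 := by nlinarith [sq_nonneg (a - b)]
  have hsplit : g (a • u + b • v) = a * g (a • u + b • v) + b * g (a • u + b • v) := by
    rw [← add_mul, hab, one_mul]
  linarith [mul_le_mul_of_nonneg_left h₁ ha, mul_le_mul_of_nonneg_left h₂ hb,
    mul_le_mul_of_nonneg_right hab2 (by positivity : (0 : ℝ) ≤ L * ‖u - v‖)]

theorem LipschitzOnWith.apply_smul_add_smul_le_of_approx (hg : LipschitzOnWith L g K)
    {x y : E} {a' b' δ : ℝ} (hu : u ∈ K) (hv : v ∈ K) (hx : x ∈ K) (hy : y ∈ K)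
    (hz : a • u + b • v ∈ K) (hz' : a' • x + b' • y ∈ K) (hab : a + b = 1) (ha' : 0 ≤ a')
    (hb' : 0 ≤ b') (hab' : a' + b' = 1) (hux : ‖u - x‖ ≤ δ) (hvy : ‖v - y‖ ≤ δ)
    (hzz' : ‖a • u + b • v - (a' • x + b' • y)‖ ≤ δ)
    (hxy : g (a' • x + b' • y) ≤ a' * g x + b' * g y) :
    g (a • u + b • v) ≤ a * g u + b * g v + 4 * L * δ := by
  have hL : (0 : ℝ) ≤ L := L.coe_nonneg
  have hlip : ∀ ⦃s⦄, s ∈ K → ∀ ⦃t⦄, t ∈ K → ∀ {r}, ‖s - t‖ ≤ r → g s ≤ g t + L * r :=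
    fun s hs t ht r hr ↦ (hg.le_add_mul hs ht).trans <| by rw [dist_eq_norm]; gcongr
  have hmove : ‖(b' - b) • (v - u)‖ ≤ 2 * δ := calc
    ‖(b' - b) • (v - u)‖ = ‖a' • (u - x) + b' • (v - y) + (a' • x + b' • y - (a • u + b • v))‖ := by
      congr 1
      rw [show a = 1 - b by linarith, show a' = 1 - b' by linarith]
      module
    _ ≤ a' * ‖u - x‖ + b' * ‖v - y‖ + ‖a • u + b • v - (a' • x + b' • y)‖ := by
      refine (norm_add₃_le).trans ?_
      rw [norm_smul, norm_smul, Real.norm_of_nonneg ha', Real.norm_of_nonneg hb',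
        norm_sub_rev (a' • x + b' • y)]
    _ ≤ a' * δ + b' * δ + δ := by gcongr
    _ = 2 * δ := by rw [← add_mul, hab']; ring
  have hslope : (b' - b) * (g v - g u) ≤ L * (2 * δ) := calc
    (b' - b) * (g v - g u) ≤ |b' - b| * |g v - g u| := by rw [← abs_mul]; exact le_abs_self _
    _ ≤ |b' - b| * (L * ‖v - u‖) := by
      gcongr
      rw [← dist_eq_norm, ← Real.dist_eq]
      exact hg.dist_le_mul v hv u hu
    _ = L * ‖(b' - b) • (v - u)‖ := by rw [norm_smul, Real.norm_eq_abs]; ring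
    _ ≤ L * (2 * δ) := by gcongr
  have hzg := hlip hz hz' hzz'
  have hxg := hlip hx hu ((norm_sub_rev x u).trans_le hux)
  have hyg := hlip hy hv ((norm_sub_rev y v).trans_le hvy)
  obtain rfl : a = 1 - b := by linarith
  obtain rfl : a' = 1 - b' := by linarith
  linarith [mul_le_mul_of_nonneg_left hxg ha', mul_le_mul_of_nonneg_left hyg hb']

end Lipschitz

section Chord

variable {E : Type*} [NormedAddCommGroup E] [NormedSpace ℝ E] {X : Set E}

theorem exists_add_smul_mem_frontier (hXo : IsOpen X) (hXb : Bornology.IsBounded X) {u w : E}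
    (hu : u ∈ closure X) (hw : w ≠ 0) :
    ∃ T : ℝ, u + T • w ∈ frontier X ∧ ∀ t, u + t • w ∈ closure X → t ≤ T := by
  set f : ℝ → E := fun t ↦ u + t • w
  have hf : Continuous f := by fun_prop
  set S := f ⁻¹' closure X
  obtain ⟨R, hR⟩ := isBounded_iff_forall_norm_le.1 hXb.closure
  have hbdd : BddAbove S := by
    refine ⟨(R + ‖u‖) / ‖w‖, fun t ht ↦ ?_⟩
    rw [le_div_iff₀ (norm_pos_iff.2 hw)]
    calc t * ‖w‖ ≤ ‖t • w‖ := by rw [norm_smul]; gcongr; exact le_abs_self t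
      _ = ‖f t - u‖ := by simp [f]
      _ ≤ R + ‖u‖ := (norm_sub_le _ _).trans (by gcongr; exact hR _ ht)
  have hne : S.Nonempty := ⟨0, by simpa [S, f] using hu⟩
  have hmem : sSup S ∈ S := (isClosed_closure.preimage hf).csSup_mem hne hbdd
  refine ⟨sSup S, ?_, fun t ht ↦ le_csSup hbdd ht⟩
  rw [hXo.frontier_eq]
  refine ⟨hmem, fun hX ↦ ?_⟩
  obtain ⟨r, hr, hball⟩ := Metric.mem_nhds_iff.1 ((hXo.preimage hf).mem_nhds hX)
  have hbeyond : sSup S + r / 2 ∈ S :=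
    subset_closure <| hball <| by
      rw [Metric.mem_ball, Real.dist_eq, add_sub_cancel_left, abs_of_pos (half_pos hr)]; linarith
  linarith [le_csSup hbdd hbeyond]

theorem exists_mem_frontier_lineMap_eq (hXo : IsOpen X) (hXb : Bornology.IsBounded X) {u v : E}
    (hu : u ∈ closure X) (hv : v ∈ closure X) (huv : u ≠ v) :
    ∃ p₀ ∈ frontier X, ∃ q₀ ∈ frontier X, ∃ s₀ s₁ : ℝ, 0 ≤ s₀ ∧ s₀ ≤ s₁ ∧ s₁ ≤ 1 ∧
      lineMap p₀ q₀ s₀ = u ∧ lineMap p₀ q₀ s₁ = v := by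
  have hw : v - u ≠ 0 := sub_ne_zero.2 huv.symm
  obtain ⟨T, hT, hTmax⟩ := exists_add_smul_mem_frontier hXo hXb hu hw
  obtain ⟨T', hT', hT'max⟩ := exists_add_smul_mem_frontier hXo hXb hu (neg_ne_zero.2 hw)
  have h1 : 1 ≤ T := hTmax 1 (by simpa using hv)
  have h0 : 0 ≤ T' := hT'max 0 (by simpa using hu)
  have hD : 0 < T + T' := by linarith
  refine ⟨_, hT', _, hT, T' / (T + T'), (T' + 1) / (T + T'), by positivity,
    by gcongr; linarith, by rw [div_le_one hD]; linarith, ?_, ?_⟩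
  · rw [lineMap_apply_module']
    match_scalars <;> field_simp <;> ring
  · rw [lineMap_apply_module']
    match_scalars <;> field_simp <;> ring

theorem norm_lineMap_sub_lineMap_le {p₀ q₀ p q : E} {μ ε : ℝ} (hμ₀ : 0 ≤ μ) (hμ₁ : μ ≤ 1)
    (hp : ‖p₀ - p‖ ≤ ε) (hq : ‖q₀ - q‖ ≤ ε) : ‖lineMap p₀ q₀ μ - lineMap p q μ‖ ≤ ε := by
  rw [← vsub_eq_sub, lineMap_vsub_lineMap, vsub_eq_sub, vsub_eq_sub]
  exact (convex_closedBall (0 : E) ε).lineMap_mem (by simpa using hp) (by simpa using hq)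
    ⟨hμ₀, hμ₁⟩ |> mem_closedBall_zero_iff.1

end Chord

section Grid

variable {E : Type*} [NormedAddCommGroup E] {ε μ : ℝ} {p q : E}

-- `gridPoint ε p q i` is the `i`-th point of `c_{pq}`; `gridIndex` rounds `lineMap p q μ` down to
-- the grid.
def gridIndex (ε : ℝ) (p q : E) (μ : ℝ) : ℕ := ⌊μ * ‖q - p‖ / ε⌋₊

theorem gridIndex_mono (hε : 0 < ε) : Monotone (gridIndex ε p q) :=
  fun _ _ h ↦ Nat.floor_mono (by gcongr)

theorem gridIndex_le (hε : 0 < ε) (hμ₀ : 0 ≤ μ) (hμ₁ : μ ≤ 1) :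
    (gridIndex ε p q μ : ℝ) ≤ ‖q - p‖ / ε :=
  (Nat.floor_le (by positivity)).trans (by gcongr; exact mul_le_of_le_one_left (norm_nonneg _) hμ₁)

variable [NormedSpace ℝ E]

def gridPoint (ε : ℝ) (p q : E) (i : ℕ) : E := lineMap p q (ε * i / ‖q - p‖)

@[simp]
theorem gridPoint_self (ε : ℝ) (p : E) (i : ℕ) : gridPoint ε p p i = p := lineMap_same_apply p _

theorem gridPoint_mem_segment (hε : 0 ≤ ε) {i j k : ℕ} (hij : i ≤ j) (hjk : j ≤ k) :
    gridPoint ε p q j ∈ segment ℝ (gridPoint ε p q i) (gridPoint ε p q k) := by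
  unfold gridPoint
  rw [← image_segment, segment_eq_Icc (by gcongr; exact hij.trans hjk)]
  exact mem_image_of_mem _ ⟨by gcongr, by gcongr⟩

theorem norm_lineMap_sub_gridPoint_le (hε : 0 < ε) (hμ : 0 ≤ μ) :
    ‖lineMap p q μ - gridPoint ε p q (gridIndex ε p q μ)‖ ≤ ε := by
  rcases eq_or_ne p q with rfl | hpq
  · simpa using hε.le
  have hN : 0 < ‖q - p‖ := norm_pos_iff.2 (sub_ne_zero.2 hpq.symm)
  set i := gridIndex ε p q μ
  have hlo : (i : ℝ) ≤ μ * ‖q - p‖ / ε := Nat.floor_le (by positivity)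
  have hhi : μ * ‖q - p‖ / ε < i + 1 := Nat.lt_floor_add_one _
  rw [le_div_iff₀ hε] at hlo
  rw [div_lt_iff₀ hε] at hhi
  calc ‖lineMap p q μ - gridPoint ε p q i‖ = |μ * ‖q - p‖ - ε * i| := by
        rw [gridPoint, lineMap_apply_module', lineMap_apply_module', add_sub_add_right_eq_sub,
          ← sub_smul, norm_smul, Real.norm_eq_abs, ← abs_of_pos hN, ← abs_mul, abs_of_pos hN]
        congr 1
        field_simp
    _ ≤ ε := abs_le.2 ⟨by linarith, by linarith⟩

end Grid

section Meps

variable {d : ℕ} {ε : ℝ} {p q x y : Esp d} {a b : ℝ}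

theorem gridPoint_mem_discreteSeg {i : ℕ} (hi : (i : ℝ) ≤ ‖q - p‖ / ε) :
    gridPoint ε p q i ∈ discreteSeg ε p q :=
  ⟨i, hi, by rw [gridPoint, lineMap_apply_module', add_comm]⟩

theorem discreteSeg_subset_segment (hε : 0 < ε) : discreteSeg ε p q ⊆ segment ℝ p q := by
  rintro _ ⟨i, hi, rfl⟩
  rcases eq_or_ne p q with rfl | hpq
  · simp
  have hN : 0 < ‖q - p‖ := norm_pos_iff.2 (sub_ne_zero.2 hpq.symm)
  rw [add_comm, ← lineMap_apply_module']
  refine lineMap_mem_segment ℝ p q ⟨by positivity, ?_⟩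
  rw [div_le_one hN, mul_comm]
  exact (le_div_iff₀ hε).1 hi

theorem ellVal_smul_add_smul (g : Esp d → ℝ) (hxy : x ≠ y) (ha : 0 ≤ a) (hab : a + b = 1) :
    ellVal g x y (a • x + b • y) = g (a • x + b • y) - a * g x - b * g y := by
  have hweight : ‖a • x + b • y - y‖ / ‖x - y‖ = a := by
    rw [show a • x + b • y - y = a • (x - y) by rw [show b = 1 - a by linarith]; module,
      norm_smul, Real.norm_of_nonneg ha,
      mul_div_cancel_right₀ _ (norm_ne_zero_iff.2 (sub_ne_zero.2 hxy))]
  rw [ellVal, hweight, show 1 - a = b by linarith]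

theorem SatisfiesMeps.apply_smul_add_smul_le {U : Set (Esp d)} {g : Esp d → ℝ}
    (hg : SatisfiesMeps ε U g) (h : MemMeps ε U x y (a • x + b • y)) (ha : 0 ≤ a)
    (hab : a + b = 1) : g (a • x + b • y) ≤ a * g x + b * g y := by
  have := hg x y _ h
  obtain ⟨-, -, -, -, -, -, -, -, hxy, -⟩ := h
  rw [ellVal_smul_add_smul g hxy ha hab] at this
  linarith

theorem MemMeps.mem_closure {X U : Set (Esp d)} {z : Esp d} (h : MemMeps ε U x y z)
    (hX : Convex ℝ X) (hε : 0 < ε) (hU : U ⊆ closure X) :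
    x ∈ closure X ∧ y ∈ closure X ∧ z ∈ closure X := by
  obtain ⟨p, hp, q, hq, -, hx, hy, hz, -⟩ := h
  have hseg := (discreteSeg_subset_segment hε).trans (hX.closure.segment_subset (hU hp) (hU hq))
  exact ⟨hseg hx, hseg hy, hseg hz⟩

end Meps

section Approximation

variable {d : ℕ} {X U : Set (Esp d)} {ε : ℝ}

theorem exists_memMeps_near (hXo : IsOpen X) (hXb : Bornology.IsBounded X) (hε : 0 < ε)
    (hU : IsBoundarySample X ε U) {u v : Esp d} (hu : u ∈ closure X) (hv : v ∈ closure X)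
    (huv : 4 * ε < ‖u - v‖) {a b : ℝ} (ha : 0 ≤ a) (hb : 0 ≤ b) (hab : a + b = 1) :
    ∃ x y : Esp d, ∃ a' b' : ℝ, 0 ≤ a' ∧ 0 ≤ b' ∧ a' + b' = 1 ∧
      MemMeps ε U x y (a' • x + b' • y) ∧ ‖u - x‖ ≤ 2 * ε ∧ ‖v - y‖ ≤ 2 * ε ∧
      ‖a • u + b • v - (a' • x + b' • y)‖ ≤ 2 * ε := by
  have hne : u ≠ v := by rintro rfl; rw [sub_self, norm_zero] at huv; linarith
  obtain ⟨p₀, hp₀, q₀, hq₀, s₀, s₁, hs₀, hs₀₁, hs₁, rfl, rfl⟩ :=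
    exists_mem_frontier_lineMap_eq hXo hXb hu hv hne
  obtain ⟨p, hp, hpp₀⟩ := hU.2 p₀ hp₀
  obtain ⟨q, hq, hqq₀⟩ := hU.2 q₀ hq₀
  have hnear : ∀ t, 0 ≤ t → t ≤ 1 →
      ‖lineMap p₀ q₀ t - gridPoint ε p q (gridIndex ε p q t)‖ ≤ 2 * ε := fun t h₀ h₁ ↦ calc
    _ ≤ ‖lineMap p₀ q₀ t - lineMap p q t‖ + ‖lineMap p q t - gridPoint ε p q (gridIndex ε p q t)‖ :=
      norm_sub_le_norm_sub_add_norm_sub _ _ _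
    _ ≤ ε + ε := add_le_add (norm_lineMap_sub_lineMap_le h₀ h₁ hpp₀ hqq₀)
      (norm_lineMap_sub_gridPoint_le hε h₀)
    _ = 2 * ε := by ring
  have hz : a • lineMap p₀ q₀ s₀ + b • lineMap p₀ q₀ s₁ = lineMap p₀ q₀ (a * s₀ + b * s₁) := by
    simp only [lineMap_apply_module']
    rw [show a = 1 - b by linarith]
    module
  have hμ₀ : s₀ ≤ a * s₀ + b * s₁ := by nlinarith
  have hμ₁ : a * s₀ + b * s₁ ≤ s₁ := by nlinarith
  set x := gridPoint ε p q (gridIndex ε p q s₀)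
  set y := gridPoint ε p q (gridIndex ε p q s₁)
  have hux : ‖lineMap p₀ q₀ s₀ - x‖ ≤ 2 * ε := hnear s₀ hs₀ (hs₀₁.trans hs₁)
  have hvy : ‖lineMap p₀ q₀ s₁ - y‖ ≤ 2 * ε := hnear s₁ (hs₀.trans hs₀₁) hs₁
  have hmono := gridIndex_mono (p := p) (q := q) hε
  obtain ⟨a', b', ha', hb', hab', hz'⟩ :=
    gridPoint_mem_segment (p := p) (q := q) hε.le (hmono hμ₀) (hmono hμ₁)
  have hxy : x ≠ y := by
    intro h
    have := norm_sub_le_norm_sub_add_norm_sub (lineMap p₀ q₀ s₀) x (lineMap p₀ q₀ s₁)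
    rw [h, norm_sub_rev y] at this
    rw [h] at hux
    linarith
  have hpq : p ≠ q := by rintro rfl; exact hxy (by simp [x, y])
  have hmem : ∀ t, 0 ≤ t → t ≤ 1 → gridPoint ε p q (gridIndex ε p q t) ∈ discreteSeg ε p q :=
    fun t h₀ h₁ ↦ gridPoint_mem_discreteSeg (gridIndex_le hε h₀ h₁)
  refine ⟨x, y, a', b', ha', hb', hab', ⟨p, hp, q, hq, hpq, hmem _ hs₀ (hs₀₁.trans hs₁),
    hmem _ (hs₀.trans hs₀₁) hs₁, hz' ▸ hmem _ (hs₀.trans hμ₀) (hμ₁.trans hs₁), hxy,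
    ⟨a', b', ha', hb', hab', rfl⟩⟩, hux, hvy, ?_⟩
  rw [hz, hz']
  exact hnear _ (hs₀.trans hμ₀) (hμ₁.trans hs₁)

theorem isApproxConvexOn_closure {g : Esp d → ℝ} {L : ℝ≥0} (hXc : Convex ℝ X) (hXo : IsOpen X)
    (hXb : Bornology.IsBounded X) (hε : 0 < ε) (hU : IsBoundarySample X ε U)
    (hg : LipschitzOnWith L g (closure X)) (hsat : SatisfiesMeps ε U g) :
    IsApproxConvexOn (closure X) g (8 * L * ε) := by
  intro u hu v hv a b ha hb hab
  have hz := hXc.closure hu hv ha hb hab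
  rcases le_or_gt ‖u - v‖ (4 * ε) with hclose | hfar
  · have := hg.apply_smul_add_smul_le hu hv hz ha hb hab
    linarith [mul_le_mul_of_nonneg_left hclose L.coe_nonneg, mul_nonneg L.coe_nonneg hε.le]
  · obtain ⟨x, y, a', b', ha', hb', hab', hM, hux, hvy, hzz'⟩ :=
      exists_memMeps_near hXo hXb hε hU hu hv hfar ha hb hab
    obtain ⟨hx, hy, hz'⟩ := hM.mem_closure hXc hε (hU.1.trans frontier_subset_closure)
    have := hg.apply_smul_add_smul_le_of_approx hu hv hx hy hz hz' hab ha' hb' hab' hux hvy hzz'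
      (hsat.apply_smul_add_smul_le hM ha' hab')
    linarith

end Approximation

/-- There is a constant `C = C(d)` such that for every bounded open convex
`X ⊆ ℝ^d`, every `ε > 0`, every boundary `ε`-sample `U ⊆ ∂X` with constraint set `M_ε`,
and every Lipschitz `g ∈ C(X)` satisfying `ℓ(g) ≤ 0` for all `ℓ ∈ M_ε`, the convex envelope
`ḡ` of `g` satisfies `‖g − ḡ‖_∞ ≤ C · Lip(g) · ε`. -/
theorem stmt4 (d : ℕ) : ∃ C : ℝ, 0 < C ∧
    ∀ (X : Set (Esp d)), Convex ℝ X → IsOpen X → Bornology.IsBounded X →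
    ∀ ε : ℝ, 0 < ε → ∀ U : Set (Esp d), IsBoundarySample X ε U →
    ∀ (g : Esp d → ℝ) (L : ℝ≥0), LipschitzOnWith L g (closure X) →
    SatisfiesMeps ε U g →
    ∀ x ∈ X, |g x - convEnv X g x| ≤ C * L * ε := by
  refine ⟨8 * d + 1, by positivity, fun X hXc hXo hXb ε hε U hU g L hg hsat x hx ↦ ?_⟩
  have hLε : 0 ≤ (L : ℝ) * ε := by positivity
  calc |g x - convEnv X g x| ≤ d * (8 * L * ε) :=
        abs_sub_convEnv_le hXc.closure subset_closure
          (isApproxConvexOn_closure hXc hXo hXb hε hU hg hsat) (by positivity) hx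
    _ ≤ (8 * d + 1) * L * ε := by linarith

end
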